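/- Let G be the free metabelian group of rank n with standard generators x₁,…,xₙ. Then the commutator subgroup G' is generated, as a subgroup of G, by the set of collected conjugated commutators {w⁻¹·⁅xᵢ,xⱼ⁆·w : 1 ≤ j < i ≤ n, w an element of the subgroup of G generated by x₁,…,xᵢ}. -/

import Mathlib

/-- The commutator ⁅a,b⁆ = a⁻¹b⁻¹ab (paper convention). -/
def pcomm {G : Type*} [Group G] (a b : G) : G := a⁻¹ * b⁻¹ * a * b

instance (n : ℕ) : (derivedSeries (FreeGroup (Fin n)) 2).Normal :=
  derivedSeries_normal _ _

/-- The free metabelian group of rank n: the quotient of the free group on n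
generators by its second derived subgroup. -/
def freeMetabelian (n : ℕ) :=
  FreeGroup (Fin n) ⧸ derivedSeries (FreeGroup (Fin n)) 2

instance (n : ℕ) : Group (freeMetabelian n) :=
  inferInstanceAs (Group (FreeGroup (Fin n) ⧸ derivedSeries (FreeGroup (Fin n)) 2))

/-- The images of the standard generators of the free group in the free
metabelian group. -/
def xgen (n : ℕ) (i : Fin n) : freeMetabelian n :=
  QuotientGroup.mk (FreeGroup.of i)

/-!
Let `N` be the subgroup generated by the collected conjugated commutators. Its generators are
conjugates of commutators, so `N ≤ G'`; conversely `N` contains every `⁅xᵢ, xⱼ⁆`, so `G' ≤ N`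
as soon as `N` is normal, i.e. as soon as conjugating a generator `w⁻¹ ⁅xᵢ, xⱼ⁆ w` by `xₖ^{±1}`
stays in `N`. For `k ≤ i` this only lengthens `w`. For `k > i`, since `G'` is abelian,
conjugation by `w xₖ^{±1}` and by `xₖ^{±1} w` agree on `G'`; this splits the result into the old
generator times `w⁻¹ ⁅⁅xᵢ, xⱼ⁆, xₖ^{±1}⁆ w`, and an induction on `⁅xᵢ, xⱼ⁆` as a word in
`x₁, …, xₖ₋₁` writes `⁅⁅xᵢ, xⱼ⁆, xₖ^{±1}⁆` as a product of conjugates of the `⁅xₖ, xₘ⁆`, `m < k`,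
by elements of `⟨x₁, …, xₖ⟩`.
-/

open Subgroup hiding commutator commutator_def
open Set
open scoped commutatorElement

section

variable {G : Type*} [Group G]

theorem conj_mem_closure_of_forall_conj_mem {s : Set G} {g : G}
    (hs : ∀ a ∈ s, g⁻¹ * a * g ∈ closure s) {y : G} (hy : y ∈ closure s) :
    g⁻¹ * y * g ∈ closure s := by
  let f : G →* G := (MulAut.conj g⁻¹).toMonoidHom
  have hle : closure s ≤ (closure s).comap f :=
    closure_le _ |>.mpr fun a ha => by simpa [f] using hs a ha
  simpa [f] using hle hy

theorem mem_normalizer_closure_of_forall_conj_mem {s : Set G} {g : G}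
    (h₁ : ∀ a ∈ s, g⁻¹ * a * g ∈ closure s) (h₂ : ∀ a ∈ s, g * a * g⁻¹ ∈ closure s) :
    g ∈ normalizer (closure s : Set G) := by
  refine mem_normalizer_iff''.mpr fun y => ⟨conj_mem_closure_of_forall_conj_mem h₁, fun hy => ?_⟩
  have h₂' : ∀ a ∈ s, g⁻¹⁻¹ * a * g⁻¹ ∈ closure s := by simpa using h₂
  simpa [mul_assoc] using conj_mem_closure_of_forall_conj_mem h₂' hy

theorem commutator_le_of_closure_eq_top {s : Set G} (hs : closure s = ⊤)
    {N : Subgroup G} [N.Normal] (h : ∀ a ∈ s, ∀ b ∈ s, ⁅a, b⁆ ∈ N) : commutator G ≤ N := by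
  refine Normal.quotient_commutative_iff_commutator_le.mp ⟨⟨fun p q => ?_⟩⟩
  let t : Set (G ⧸ N) := QuotientGroup.mk' N '' s
  have ht : closure t = ⊤ := by
    rw [← MonoidHom.map_closure, hs, map_top_of_surjective _ (QuotientGroup.mk'_surjective N)]
  have hcomm : ∀ a ∈ t, ∀ b ∈ t, a * b = b * a := by
    rintro _ ⟨a, ha, rfl⟩ _ ⟨b, hb, rfl⟩
    rw [← commutatorElement_eq_one_iff_mul_comm, ← map_commutatorElement, QuotientGroup.mk'_apply,
      QuotientGroup.eq_one_iff]
    exact h a ha b hb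
  have := (isMulCommutative_closure hcomm).is_comm.comm ⟨p, ht ▸ mem_top p⟩ ⟨q, ht ▸ mem_top q⟩
  exact congrArg Subtype.val this

theorem pcomm_mem_commutator (a b : G) : pcomm a b ∈ commutator G := by
  have : pcomm a b = ⁅a⁻¹, b⁻¹⁆ := by simp only [pcomm, commutatorElement_def, inv_inv]
  rw [this, commutator_def]
  exact commutator_mem_commutator (mem_top _) (mem_top _)

theorem commute_of_mem_commutator (hG : derivedSeries G 2 = ⊥) {u v : G}
    (hu : u ∈ commutator G) (hv : v ∈ commutator G) : Commute u v := by
  have : ⁅u, v⁆ ∈ derivedSeries G 2 := by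
    rw [derivedSeries_succ, derivedSeries_one]
    exact commutator_mem_commutator hu hv
  rw [hG, mem_bot] at this
  exact commutatorElement_eq_one_iff_commute.mp this

theorem conj_mul_comm_of_mem_commutator (hG : derivedSeries G 2 = ⊥) {u : G}
    (hu : u ∈ commutator G) (a b : G) :
    (a * b)⁻¹ * u * (a * b) = (b * a)⁻¹ * u * (b * a) := by
  have hconj : (b * a)⁻¹ * u * (b * a) ∈ commutator G := by
    simpa using Normal.conj_mem inferInstance u hu (b * a)⁻¹
  have hc := commute_of_mem_commutator hG hconj (pcomm_mem_commutator a b)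
  calc (a * b)⁻¹ * u * (a * b) = (pcomm a b)⁻¹ * ((b * a)⁻¹ * u * (b * a)) * pcomm a b := by
        simp only [pcomm]; group
    _ = (b * a)⁻¹ * u * (b * a) := by rw [mul_assoc, hc.eq, inv_mul_cancel_left]

end

section CollectedCommutators

variable {G ι : Type*} [Group G] [LinearOrder ι] (x : ι → G)

def collectedCommutatorsAt (i : ι) : Set G :=
  {a | ∃ j, j < i ∧ ∃ w ∈ closure (x '' Iic i), a = w⁻¹ * pcomm (x i) (x j) * w}

def collectedCommutators : Set G :=
  {a | ∃ i, a ∈ collectedCommutatorsAt x i}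

variable {x}

theorem conj_mem_closure_collectedCommutatorsAt {k : ι} {v : G} (hv : v ∈ closure (x '' Iic k))
    {a : G} (ha : a ∈ closure (collectedCommutatorsAt x k)) :
    v⁻¹ * a * v ∈ closure (collectedCommutatorsAt x k) := by
  refine conj_mem_closure_of_forall_conj_mem ?_ ha
  rintro _ ⟨m, hm, w, hw, rfl⟩
  exact subset_closure ⟨m, hm, w * v, mul_mem hw hv, by group⟩

theorem pcomm_mem_closure_collectedCommutatorsAt {k : ι} {c : G} (hc : c = x k ∨ c = (x k)⁻¹)
    {v : G} (hv : v ∈ closure (x '' Iio k)) :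
    pcomm v c ∈ closure (collectedCommutatorsAt x k) := by
  have hIio : closure (x '' Iio k) ≤ closure (x '' Iic k) :=
    closure_mono (image_mono Iio_subset_Iic_self)
  have hxk : x k ∈ closure (x '' Iic k) := subset_closure ⟨k, le_rfl, rfl⟩
  induction hv using closure_induction with
  | mem _ hv =>
    obtain ⟨m, hm, rfl⟩ := hv
    rcases hc with rfl | rfl
    · have hgen : pcomm (x k) (x m) ∈ closure (collectedCommutatorsAt x k) :=
        subset_closure ⟨m, hm, 1, one_mem _, by group⟩
      simpa [pcomm, mul_assoc] using inv_mem hgen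
    · exact subset_closure ⟨m, hm, (x k)⁻¹, inv_mem hxk, by simp only [pcomm]; group⟩
  | one => simp [pcomm]
  | mul y z hy hz hyc hzc =>
    have : pcomm (y * z) c = (z⁻¹ * pcomm y c * z) * pcomm z c := by simp only [pcomm]; group
    rw [this]
    exact mul_mem (conj_mem_closure_collectedCommutatorsAt (hIio hz) hyc) hzc
  | inv y hy hyc =>
    have : pcomm y⁻¹ c = (y⁻¹⁻¹ * pcomm y c * y⁻¹)⁻¹ := by simp only [pcomm]; group
    rw [this]
    exact inv_mem (conj_mem_closure_collectedCommutatorsAt (inv_mem (hIio hy)) hyc)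

theorem closure_collectedCommutatorsAt_le (k : ι) :
    closure (collectedCommutatorsAt x k) ≤ closure (collectedCommutators x) :=
  closure_mono fun _ ha => ⟨k, ha⟩

theorem conj_mem_closure_collectedCommutators (hG : derivedSeries G 2 = ⊥) {k : ι} {c : G}
    (hc : c = x k ∨ c = (x k)⁻¹) {a : G} (ha : a ∈ collectedCommutators x) :
    c⁻¹ * a * c ∈ closure (collectedCommutators x) := by
  obtain ⟨i, j, hji, w, hw, rfl⟩ := ha
  rcases le_or_gt k i with hki | hik
  · have hc' : c ∈ closure (x '' Iic i) := by
      have hxk : x k ∈ closure (x '' Iic i) := subset_closure ⟨k, hki, rfl⟩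
      rcases hc with rfl | rfl
      exacts [hxk, inv_mem hxk]
    exact subset_closure ⟨i, j, hji, w * c, mul_mem hw hc', by group⟩
  · set u := pcomm (x i) (x j)
    have hu : u ∈ closure (x '' Iio k) := by
      have hxi : x i ∈ closure (x '' Iio k) := subset_closure ⟨i, hik, rfl⟩
      have hxj : x j ∈ closure (x '' Iio k) := subset_closure ⟨j, hji.trans hik, rfl⟩
      exact mul_mem (mul_mem (mul_mem (inv_mem hxi) (inv_mem hxj)) hxi) hxj
    have hwk : w ∈ closure (x '' Iic k) :=
      closure_mono (image_mono (Iic_subset_Iic.mpr hik.le)) hw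
    have hsplit : c⁻¹ * (w⁻¹ * u * w) * c = (w⁻¹ * u * w) * (w⁻¹ * pcomm u c * w) := by
      calc c⁻¹ * (w⁻¹ * u * w) * c = (w * c)⁻¹ * u * (w * c) := by group
        _ = (c * w)⁻¹ * u * (c * w) :=
          conj_mul_comm_of_mem_commutator hG (pcomm_mem_commutator _ _) w c
        _ = (w⁻¹ * u * w) * (w⁻¹ * pcomm u c * w) := by simp only [pcomm]; group
    rw [hsplit]
    refine mul_mem (subset_closure ⟨i, j, hji, w, hw, rfl⟩) (closure_collectedCommutatorsAt_le k ?_)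
    exact conj_mem_closure_collectedCommutatorsAt hwk
      (pcomm_mem_closure_collectedCommutatorsAt hc hu)

theorem closure_collectedCommutators_normal (hx : closure (range x) = ⊤)
    (hG : derivedSeries G 2 = ⊥) : (closure (collectedCommutators x)).Normal := by
  rw [← normalizer_eq_top_iff, eq_top_iff, ← hx, closure_le]
  rintro _ ⟨k, rfl⟩
  refine mem_normalizer_closure_of_forall_conj_mem
    (fun a ha => conj_mem_closure_collectedCommutators hG (Or.inl rfl) ha) fun a ha => ?_
  simpa using conj_mem_closure_collectedCommutators hG (Or.inr rfl) ha

theorem commutatorElement_mem_closure_collectedCommutators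
    (hN : (closure (collectedCommutators x)).Normal) {i j : ι} (hji : j < i) :
    ⁅x i, x j⁆ ∈ closure (collectedCommutators x) := by
  have hgen : pcomm (x i) (x j) ∈ closure (collectedCommutators x) :=
    subset_closure ⟨i, j, hji, 1, one_mem _, by group⟩
  have : ⁅x i, x j⁆ = (x i * x j) * pcomm (x i) (x j) * (x i * x j)⁻¹ := by
    simp only [pcomm, commutatorElement_def]; group
  exact this ▸ hN.conj_mem _ hgen _

theorem commutator_eq_closure_collectedCommutators (hx : closure (range x) = ⊤)
    (hG : derivedSeries G 2 = ⊥) : commutator G = closure (collectedCommutators x) := by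
  have hN := closure_collectedCommutators_normal hx hG
  refine le_antisymm (commutator_le_of_closure_eq_top hx ?_) (closure_le _ |>.mpr ?_)
  · rintro _ ⟨i, rfl⟩ _ ⟨j, rfl⟩
    rcases lt_trichotomy j i with hji | rfl | hij
    · exact commutatorElement_mem_closure_collectedCommutators hN hji
    · simp
    · rw [← commutatorElement_inv]
      exact inv_mem (commutatorElement_mem_closure_collectedCommutators hN hij)
  · rintro _ ⟨i, j, -, w, -, rfl⟩
    simpa using Normal.conj_mem inferInstance _ (pcomm_mem_commutator (x i) (x j)) w⁻¹

end CollectedCommutators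

theorem derivedSeries_freeMetabelian_two (n : ℕ) : derivedSeries (freeMetabelian n) 2 = ⊥ :=
  (map_derivedSeries_eq (QuotientGroup.mk'_surjective _) 2).symm.trans <|
    (Subgroup.map_eq_bot_iff _).mpr (QuotientGroup.ker_mk' _).ge

theorem closure_range_xgen (n : ℕ) : closure (range (xgen n)) = ⊤ := by
  have h := MonoidHom.map_closure (QuotientGroup.mk' (derivedSeries (FreeGroup (Fin n)) 2))
    (range FreeGroup.of)
  rw [FreeGroup.closure_range_of, map_top_of_surjective _ (QuotientGroup.mk'_surjective _),
    ← range_comp] at h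
  exact h.symm

theorem stmt12 (n : ℕ) :
    commutator (freeMetabelian n) =
      Subgroup.closure {a : freeMetabelian n |
        ∃ i j : Fin n, j < i ∧
          ∃ w ∈ Subgroup.closure (xgen n '' {k : Fin n | k ≤ i}),
            a = w⁻¹ * pcomm (xgen n i) (xgen n j) * w} :=
  commutator_eq_closure_collectedCommutators (closure_range_xgen n)
    (derivedSeries_freeMetabelian_two n)
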